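/- In the arc-cover path-cover model on a line path, a set of stations refuels a path if and only if every arc (segment between consecutive nodes or between a station and the next reachable point) within distance r is covered; equivalently, refueling all arcs of a path implies the path is traversable. -/
import Mathlib


open Classical

/-- Position of node `v_j` on the line: sum of arc lengths before it. -/
def nodePos (d : ℕ → ℝ) (j : ℕ) : ℝ := ∑ i ∈ Finset.range j, d i

/-- Arc `(v_i, v_{i+1})` is covered: some station at `v_j`, `j ≤ i`, is within range
`r` of `v_{i+1}`. -/
def ArcCovered (d : ℕ → ℝ) (S : Set ℕ) (r : ℝ) (i : ℕ) : Prop :=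
  ∃ j ≤ i, j ∈ S ∧ nodePos d (i + 1) - nodePos d j ≤ r

/-- Starting full at `v_0`, refueling at stations, the vehicle reaches `v_n` with
nonnegative fuel along the way. -/
def ReachesEnd (d : ℕ → ℝ) (S : Set ℕ) (r : ℝ) (n : ℕ) : Prop :=
  ∃ fuel : ℕ → ℝ, fuel 0 = r ∧
    ∀ i < n, fuel i - d i ≥ 0 ∧
      fuel (i + 1) = if (i + 1) ∈ S then r else fuel i - d i

/-- Arc-cover path-cover: if every arc of the path is covered and there is a
station at `v_0`, the path is traversable. -/
theorem arc_cover_implies_traversable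
    (n : ℕ) (d : ℕ → ℝ) (hd : ∀ i < n, 0 < d i)
    (S : Set ℕ) (r : ℝ) (hr : 0 < r) (h0 : 0 ∈ S)
    (hcov : ∀ i < n, ArcCovered d S r i) :
    ReachesEnd d S r n := by
  classical
  set P : ℕ → Prop := fun j => j ∈ S with hP
  -- fuel function
  let fuel : ℕ → ℝ := fun i => Nat.rec r (fun i f => if (i + 1) ∈ S then r else f - d i) i
  have hfuel0 : fuel 0 = r := rfl
  have hfuelS : ∀ i, fuel (i + 1) = if (i + 1) ∈ S then r else fuel i - d i := fun i => rfl
  -- invariant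
  have hinv : ∀ i, fuel i = r - (nodePos d i - nodePos d (Nat.findGreatest P i)) := by
    intro i
    induction i with
    | zero => simp [hfuel0, Nat.findGreatest_zero]
    | succ i ih =>
      rw [hfuelS, Nat.findGreatest_succ]
      by_cases h : (i + 1) ∈ S
      · simp [h, hP]
      · have hP' : ¬ P (i + 1) := h
        simp only [h, if_false, hP', ih]
        have : nodePos d (i + 1) = nodePos d i + d i := Finset.sum_range_succ _ _
        rw [this]; ring
  refine ⟨fuel, hfuel0, fun i hi => ⟨?_, hfuelS i⟩⟩
  obtain ⟨j, hj, hjS, hjr⟩ := hcov i hi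
  have hls : Nat.findGreatest P i ≤ i := Nat.findGreatest_le i
  have hjls : j ≤ Nat.findGreatest P i := Nat.le_findGreatest hj hjS
  have hmono : nodePos d j ≤ nodePos d (Nat.findGreatest P i) := by
    unfold nodePos
    rw [← Finset.sum_range_add_sum_Ico _ hjls]
    have : 0 ≤ ∑ k ∈ Finset.Ico j (Nat.findGreatest P i), d k := by
      apply Finset.sum_nonneg
      intro k hk
      have hk2 := (Finset.mem_Ico.mp hk).2
      exact le_of_lt (hd k (lt_of_lt_of_le hk2 (le_of_lt (lt_of_le_of_lt hls hi))))
    linarith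
  have hnp : nodePos d (i + 1) = nodePos d i + d i := Finset.sum_range_succ _ _
  rw [hinv i]
  have : nodePos d (i + 1) - nodePos d (Nat.findGreatest P i) ≤ r := by linarith
  linarith
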